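/- arXiv:1902.09866 — 3 statements merged into one kernel-verified Lean document; each statement's English description precedes it below -/
import Mathlib

section
/- Let X' ⊆ ℝ² be the zonotope X' = { (2 + ε₁ + ε₂, 2 + ε₁ − ε₂) : ε₁ ∈ [−1,1], ε₂ ∈ [−1,1] }. Then the projection of X' onto each coordinate equals the interval [0,4], i.e. { x₁ : (x₁, x₂) ∈ X' } = Set.Icc 0 4 and { x₂ : (x₁, x₂) ∈ X' } = Set.Icc 0 4; moreover the exact range { max x₁ x₂ : (x₁, x₂) ∈ X' } = Set.Icc 1 4 is a strict subset of Set.Icc 0 4. -/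
/-!
Solving for the noise symbols, `ε₁ = (x₁ + x₂ - 4) / 2` and `ε₂ = (x₁ - x₂) / 2`, so `X'` is the
square `2 ≤ x₁ + x₂ ≤ 6`, `|x₁ - x₂| ≤ 2`. Each coordinate then ranges over `[0, 4]`, while
`max x₁ x₂ ≥ (x₁ + x₂) / 2 ≥ 1`: the box forgets the correlation between the coordinates.
-/

/-- The zonotope X' = { (2 + ε₁ + ε₂, 2 + ε₁ − ε₂) : ε₁, ε₂ ∈ [−1,1] }. -/
def Xzono : Set (ℝ × ℝ) :=
  { p | ∃ ε₁ ∈ Set.Icc (-1 : ℝ) 1, ∃ ε₂ ∈ Set.Icc (-1 : ℝ) 1,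
      p = (2 + ε₁ + ε₂, 2 + ε₁ - ε₂) }

open Set

theorem mem_Xzono_iff {p : ℝ × ℝ} :
    p ∈ Xzono ↔ p.1 + p.2 ∈ Icc (2 : ℝ) 6 ∧ p.1 - p.2 ∈ Icc (-2 : ℝ) 2 := by
  obtain ⟨x₁, x₂⟩ := p
  constructor
  · rintro ⟨ε₁, ⟨h₁, h₁'⟩, ε₂, ⟨h₂, h₂'⟩, hp⟩
    simp only [Prod.mk.injEq] at hp
    obtain ⟨rfl, rfl⟩ := hp
    exact ⟨⟨by linarith, by linarith⟩, ⟨by linarith, by linarith⟩⟩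
  · rintro ⟨⟨hs, hs'⟩, ⟨hd, hd'⟩⟩
    refine ⟨(x₁ + x₂ - 4) / 2, ⟨by linarith, by linarith⟩,
      (x₁ - x₂) / 2, ⟨by linarith, by linarith⟩, ?_⟩
    ext <;> dsimp only <;> ring

theorem image_fst_Xzono : Prod.fst '' Xzono = Icc (0 : ℝ) 4 := by
  ext x
  simp only [mem_image, mem_Xzono_iff, mem_Icc, Prod.exists]
  constructor
  · rintro ⟨x₁, x₂, ⟨⟨hs, hs'⟩, ⟨hd, hd'⟩⟩, rfl⟩
    constructor <;> linarith
  · rintro ⟨hx, hx'⟩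
    exact ⟨x, 2, ⟨⟨by linarith, by linarith⟩, ⟨by linarith, by linarith⟩⟩, rfl⟩

theorem image_snd_Xzono : Prod.snd '' Xzono = Icc (0 : ℝ) 4 := by
  ext x
  simp only [mem_image, mem_Xzono_iff, mem_Icc, Prod.exists]
  constructor
  · rintro ⟨x₁, x₂, ⟨⟨hs, hs'⟩, ⟨hd, hd'⟩⟩, rfl⟩
    constructor <;> linarith
  · rintro ⟨hx, hx'⟩
    exact ⟨2, x, ⟨⟨by linarith, by linarith⟩, ⟨by linarith, by linarith⟩⟩, rfl⟩

theorem image_max_Xzono : (fun p : ℝ × ℝ => max p.1 p.2) '' Xzono = Icc (1 : ℝ) 4 := by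
  ext y
  simp only [mem_image, mem_Xzono_iff, mem_Icc, Prod.exists]
  constructor
  · rintro ⟨x₁, x₂, ⟨⟨hs, hs'⟩, ⟨hd, hd'⟩⟩, rfl⟩
    have h₁ := le_max_left x₁ x₂
    have h₂ := le_max_right x₁ x₂
    exact ⟨by linarith, max_le (by linarith) (by linarith)⟩
  · rintro ⟨hy, hy'⟩
    -- on the diagonal up to `(3, 3)`, then along the edge `x₁ + x₂ = 6` to `(4, 2)`
    refine ⟨y, min y (6 - y), ⟨⟨?_, ?_⟩, ⟨?_, ?_⟩⟩, max_eq_left (min_le_left _ _)⟩ <;>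
      rcases min_cases y (6 - y) with ⟨h, hle⟩ | ⟨h, hlt⟩ <;> rw [h] <;> linarith

/-- Projections of X' are [0,4] on each coordinate, and the exact max-pooling
range [1,4] is strictly contained in the box bound [0,4]. -/
theorem box_vs_zonotope_on_maxpool :
    Prod.fst '' Xzono = Set.Icc (0 : ℝ) 4 ∧
    Prod.snd '' Xzono = Set.Icc (0 : ℝ) 4 ∧
    (fun p : ℝ × ℝ => max p.1 p.2) '' Xzono = Set.Icc (1 : ℝ) 4 ∧
    Set.Icc (1 : ℝ) 4 ⊂ Set.Icc (0 : ℝ) 4 :=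
  ⟨image_fst_Xzono, image_snd_Xzono, image_max_Xzono,
    Icc_ssubset_Icc_left (by norm_num) one_pos le_rfl⟩
end

section
/- Let n : ℕ, w : Fin n → ℝ, b : ℝ, and l u : Fin n → ℝ with l i ≤ u i for all i. Then the image of the box B = { x : Fin n → ℝ | ∀ i, x i ∈ Set.Icc (l i) (u i) } under the affine functional x ↦ b + Σ_i w i * x i equals the interval Set.Icc (b + Σ_i min (w i * l i) (w i * u i)) (b + Σ_i max (w i * l i) (w i * u i)). -/
open Finset in
/-- The exact range of an affine functional over a box. -/
theorem affine_range_on_box {n : ℕ} (w : Fin n → ℝ) (b : ℝ)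
    (l u : Fin n → ℝ) (h : ∀ i, l i ≤ u i) :
    (fun x : Fin n → ℝ => b + ∑ i, w i * x i) ''
      { x | ∀ i, x i ∈ Set.Icc (l i) (u i) } =
    Set.Icc (b + ∑ i, min (w i * l i) (w i * u i))
            (b + ∑ i, max (w i * l i) (w i * u i)) := by
  set a : Fin n → ℝ := fun i => if 0 ≤ w i then l i else u i with ha
  set c : Fin n → ℝ := fun i => if 0 ≤ w i then u i else l i with hc
  have hmin : ∀ i, w i * a i = min (w i * l i) (w i * u i) := by
    intro i
    by_cases hw : 0 ≤ w i
    · simp only [ha, hw, if_pos]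
      exact (min_eq_left (mul_le_mul_of_nonneg_left (h i) hw)).symm
    · simp only [ha, hw, if_neg, not_false_iff]
      exact (min_eq_right (mul_le_mul_of_nonpos_left (h i) (le_of_not_ge hw))).symm
  have hmax : ∀ i, w i * c i = max (w i * l i) (w i * u i) := by
    intro i
    by_cases hw : 0 ≤ w i
    · simp only [hc, hw, if_pos]
      exact (max_eq_right (mul_le_mul_of_nonneg_left (h i) hw)).symm
    · simp only [hc, hw, if_neg, not_false_iff]
      exact (max_eq_left (mul_le_mul_of_nonpos_left (h i) (le_of_not_ge hw))).symm
  have hal : ∀ i, a i ∈ Set.Icc (l i) (u i) := by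
    intro i; by_cases hw : 0 ≤ w i <;>
      simp [ha, hw, h i, le_refl]
  have hcl : ∀ i, c i ∈ Set.Icc (l i) (u i) := by
    intro i; by_cases hw : 0 ≤ w i <;>
      simp [hc, hw, h i, le_refl]
  ext y
  constructor
  · rintro ⟨x, hx, rfl⟩
    refine ⟨add_le_add le_rfl (Finset.sum_le_sum fun i _ => ?_),
            add_le_add le_rfl (Finset.sum_le_sum fun i _ => ?_)⟩
    · rw [← hmin i]
      rcases le_or_gt 0 (w i) with hw | hw
      · simp only [ha, hw, if_pos]
        exact mul_le_mul_of_nonneg_left (hx i).1 hw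
      · simp only [ha, not_le.mpr hw, if_neg, not_false_iff]
        exact mul_le_mul_of_nonpos_left (hx i).2 hw.le
    · rw [← hmax i]
      rcases le_or_gt 0 (w i) with hw | hw
      · simp only [hc, hw, if_pos]
        exact mul_le_mul_of_nonneg_left (hx i).2 hw
      · simp only [hc, not_le.mpr hw, if_neg, not_false_iff]
        exact mul_le_mul_of_nonpos_left (hx i).1 hw.le
  · rintro ⟨h1, h2⟩
    set S := ∑ i, min (w i * l i) (w i * u i) with hS
    set T := ∑ i, max (w i * l i) (w i * u i) with hT
    by_cases hST : T - S = 0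
    · have hy : y = b + S := le_antisymm (by linarith) h1
      refine ⟨a, fun i => hal i, ?_⟩
      simp only
      rw [hy]
      congr 1
      exact Finset.sum_congr rfl fun i _ => hmin i
    · have hSTpos : 0 < T - S := by
        rcases lt_or_eq_of_le (sub_nonneg.mpr (by linarith : S ≤ T)) with hlt | heq
        · exact hlt
        · exact absurd heq.symm hST
      set t : ℝ := (y - b - S) / (T - S) with hts
      have ht0 : 0 ≤ t := div_nonneg (by linarith) hSTpos.le
      have ht1 : t ≤ 1 := by
        rw [hts, div_le_one hSTpos]; linarith
      refine ⟨fun i => a i + t * (c i - a i), fun i => ?_, ?_⟩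
      · obtain ⟨ha1, ha2⟩ := hal i
        obtain ⟨hc1, hc2⟩ := hcl i
        constructor
        · show l i ≤ a i + t * (c i - a i)
          nlinarith
        · show a i + t * (c i - a i) ≤ u i
          nlinarith
      · simp only
        have hsum : ∑ i, w i * (a i + t * (c i - a i)) = S + t * (T - S) := by
          have : ∀ i ∈ Finset.univ, w i * (a i + t * (c i - a i)) =
              w i * a i + t * (w i * c i - w i * a i) := by
            intro i _; ring
          rw [Finset.sum_congr rfl this, Finset.sum_add_distrib, ← Finset.mul_sum]
          have hSa : ∑ i, w i * a i = S := Finset.sum_congr rfl fun i _ => hmin i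
          have hTc : ∑ i, w i * c i = T := Finset.sum_congr rfl fun i _ => hmax i
          rw [Finset.sum_sub_distrib, hSa, hTc]
        rw [hsum, hts]
        field_simp
        ring
end

section
/- The exact output range { ReLU (2*x + 3*y) − ReLU (x − y) : x ∈ Set.Icc (4:ℝ) 6, y ∈ Set.Icc (3:ℝ) 4 } equals Set.Icc 16 22, where ReLU t = max t 0; and Set.Icc (16:ℝ) 22 is a strict subset of Set.Icc 14 24, the bound obtained by interval arithmetic (Set.Icc (17:ℝ) 24 + Set.Icc (−3:ℝ) 0 = Set.Icc 14 24 as a Minkowski sum, the second interval being the negation of the hidden range [0,3]). -/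
open Pointwise

/-- The ReLU activation function. -/
def ReLU (t : ℝ) : ℝ := max t 0

/-!
On the box `[4,6] × [3,4]` both neurons are active (`2x + 3y ≥ 17` and `y ≤ 4 ≤ x`), so the
network is the affine map `x + 4y` there, whose range is the Minkowski sum
`[4,6] + 4 · [3,4] = [16,22]`. Interval arithmetic instead bounds the two neurons separately,
losing the correlation between them.
-/

theorem ReLU_of_nonneg {t : ℝ} (ht : 0 ≤ t) : ReLU t = t :=
  max_eq_left ht

theorem relu_network_eq_of_active {x y : ℝ} (hx : 0 ≤ 2 * x + 3 * y) (hxy : y ≤ x) :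
    ReLU (2 * x + 3 * y) - ReLU (x - y) = x + 4 * y := by
  rw [ReLU_of_nonneg hx, ReLU_of_nonneg (sub_nonneg.2 hxy)]
  ring

theorem image2_add_mul_Icc {a b c d k : ℝ} (hk : 0 ≤ k) (hab : a ≤ b) (hcd : c ≤ d) :
    Set.image2 (fun x y => x + k * y) (Set.Icc a b) (Set.Icc c d) =
      Set.Icc (a + k * c) (b + k * d) := by
  rw [← Set.image2_image_right (· + ·) (k * ·), Set.image_mul_left_Icc hk hcd, Set.image2_add,
    Set.Icc_add_Icc hab (mul_le_mul_of_nonneg_left hcd hk)]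

/-- Example 4(a): the exact output range [16,22] is strictly contained in
the interval-arithmetic bound [14,24]. -/
theorem exact_range_vs_interval_example_a :
    ({ z : ℝ | ∃ x ∈ Set.Icc (4 : ℝ) 6, ∃ y ∈ Set.Icc (3 : ℝ) 4,
        z = ReLU (2 * x + 3 * y) - ReLU (x - y) } = Set.Icc (16 : ℝ) 22) ∧
    (Set.Icc (17 : ℝ) 24 + Set.Icc (-3 : ℝ) 0 = Set.Icc (14 : ℝ) 24) ∧
    Set.Icc (16 : ℝ) 22 ⊂ Set.Icc (14 : ℝ) 24 := by
  have network_on_box : ∀ x ∈ Set.Icc (4 : ℝ) 6, ∀ y ∈ Set.Icc (3 : ℝ) 4,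
      ReLU (2 * x + 3 * y) - ReLU (x - y) = x + 4 * y := fun x hx y hy =>
    relu_network_eq_of_active (by linarith [hx.1, hy.1]) (hy.2.trans hx.1)
  refine ⟨?_, ?_, ?_⟩
  · calc {z : ℝ | ∃ x ∈ Set.Icc (4 : ℝ) 6, ∃ y ∈ Set.Icc (3 : ℝ) 4,
            z = ReLU (2 * x + 3 * y) - ReLU (x - y)}
        _ = Set.image2 (fun x y => ReLU (2 * x + 3 * y) - ReLU (x - y))
              (Set.Icc 4 6) (Set.Icc 3 4) := by
          simp only [Set.image2, eq_comm]
        _ = Set.image2 (fun x y => x + 4 * y) (Set.Icc 4 6) (Set.Icc 3 4) :=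
          Set.image2_congr network_on_box
        _ = Set.Icc (4 + 4 * 3) (6 + 4 * 4) :=
          image2_add_mul_Icc (by norm_num) (by norm_num) (by norm_num)
        _ = Set.Icc 16 22 := by norm_num
  · rw [Set.Icc_add_Icc] <;> norm_num
  · rw [Set.ssubset_iff_of_subset (Set.Icc_subset_Icc (by norm_num) (by norm_num))]
    exact ⟨14, by norm_num, by norm_num⟩
end
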